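/- Fix u ∈ ℝ, constants H₀ > 0, A₁ > 0, κ > 0, ṽ > 0 and an exponent p ≥ 1. Suppose that for every v' ≥ ṽ with 1 ≤ p ≤ A₁ (n v')^κ one has max_{1 ≤ j ≤ n} E (Im R_{jj}(u + i v'))^p ≤ H₀^p log^p n · Ψ(u + i v')^p, where Ψ(u + iv') := Im s(u + iv') + p/(n v'). Then for every s₀ ≥ 1 and every v ≥ ṽ/s₀ with 1 ≤ p ≤ A₁ (n s₀ v)^κ one has max_{1 ≤ j,k ≤ n} E (Im R_{jk}(u + i v))^p ≤ s₀^{2p} H₀^p log^p n · Ψ(u + i v)^p. -/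

import Mathlib

/-!
Diagonalising the real symmetric matrix `W = U diag(λ) Uᵀ` gives
`Im R_jk(u + iv) = ∑ₘ U_jm U_km v / ((λₘ - u)² + v²)`. Hence `|Im R_jk| ≤ (Im R_jj + Im R_kk) / 2`,
and since `v ↦ v² / (a + v²)` increases, `Im R_jj(u + iv) ≤ s₀ Im R_jj(u + i s₀ v)`.
For the semicircle law, `m = |s|²` satisfies `Im s / v = m / (1 - m)` and
`u² m / (1 + m)² + v² m / (1 - m)² = 1`, which forces `m`, hence `Im s(u + iv) / v`, to decrease
in `v`; so `Ψ(u + i s₀ v) ≤ s₀ Ψ(u + iv)`. The hypothesis at scale `s₀ v`, combined with convexity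
of `x ↦ x ^ p`, then costs one factor `s₀ ^ p` for each comparison.
-/

open MeasureTheory

/-- The resolvent `R(z) = (B - z I)⁻¹` of a real matrix `B`, viewed over `ℂ`. -/
noncomputable def resolv {n : ℕ} (B : Matrix (Fin n) (Fin n) ℝ) (z : ℂ) :
    Matrix (Fin n) (Fin n) ℂ :=
  (B.map (fun x => (x : ℂ)) - z • (1 : Matrix (Fin n) (Fin n) ℂ))⁻¹

noncomputable def halfPlanePoissonKernel (u v x : ℝ) : ℝ := v / ((x - u) ^ 2 + v ^ 2)

theorem im_inv_ofReal_sub (u v x : ℝ) :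
    (((x : ℂ) - (u + v * Complex.I))⁻¹).im = halfPlanePoissonKernel u v x := by
  have : (x : ℂ) - (u + v * Complex.I) = ⟨x - u, -v⟩ := by apply Complex.ext <;> simp
  rw [this, Complex.inv_im, Complex.normSq_mk, halfPlanePoissonKernel]
  ring

theorem halfPlanePoissonKernel_nonneg (u x : ℝ) {v : ℝ} (hv : 0 ≤ v) :
    0 ≤ halfPlanePoissonKernel u v x := by
  unfold halfPlanePoissonKernel; positivity

theorem halfPlanePoissonKernel_le_inv (u x : ℝ) {v : ℝ} (hv : 0 < v) :
    halfPlanePoissonKernel u v x ≤ v⁻¹ := by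
  rw [halfPlanePoissonKernel, div_le_iff₀ (by positivity), inv_mul_eq_div, le_div_iff₀ hv]
  nlinarith [sq_nonneg (x - u)]

theorem mul_halfPlanePoissonKernel_le (u x : ℝ) {v v' : ℝ} (hv : 0 < v) (hvv' : v ≤ v') :
    v * halfPlanePoissonKernel u v x ≤ v' * halfPlanePoissonKernel u v' x := by
  have hv' : 0 < v' := hv.trans_le hvv'
  simp only [halfPlanePoissonKernel, mul_div_assoc']
  rw [div_le_div_iff₀ (by positivity) (by positivity)]
  nlinarith [mul_le_mul hvv' hvv' hv.le hv'.le, sq_nonneg (x - u)]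

open Matrix

theorem Matrix.IsSymm.exists_orthogonal_diagonalization {ι : Type*} [Fintype ι] [DecidableEq ι]
    {M : Matrix ι ι ℝ} (hM : M.IsSymm) :
    ∃ (U : Matrix ι ι ℝ) (d : ι → ℝ),
      Uᵀ * U = 1 ∧ U * Uᵀ = 1 ∧ M = U * diagonal d * Uᵀ := by
  have hH : M.IsHermitian := isHermitian_iff_isSymm.mpr hM
  refine ⟨hH.eigenvectorUnitary, hH.eigenvalues, ?_, ?_, ?_⟩
  · simpa [star_eq_conjTranspose] using Unitary.coe_star_mul_self hH.eigenvectorUnitary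
  · simpa [star_eq_conjTranspose] using Unitary.coe_mul_star_self hH.eigenvectorUnitary
  · simpa [star_eq_conjTranspose] using hH.spectral_theorem

theorem resolv_eq_of_diagonalization {n : ℕ} {M U : Matrix (Fin n) (Fin n) ℝ} {d : Fin n → ℝ}
    (hU : Uᵀ * U = 1) (hU' : U * Uᵀ = 1) (hM : M = U * diagonal d * Uᵀ) {z : ℂ}
    (hz : z.im ≠ 0) :
    resolv M z = U.map (↑) * diagonal (fun m => ((d m : ℂ) - z)⁻¹) * Uᵀ.map (↑) := by
  have map_mul' : ∀ A B : Matrix (Fin n) (Fin n) ℝ,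
      (A * B).map ((↑) : ℝ → ℂ) = A.map (↑) * B.map (↑) := fun A B =>
    Matrix.map_mul (f := Complex.ofRealHom)
  have hne : ∀ m, (d m : ℂ) - z ≠ 0 := fun m h => hz (by simpa using congrArg Complex.im h)
  have hUc : Uᵀ.map ((↑) : ℝ → ℂ) * U.map (↑) = 1 := by
    rw [← map_mul', hU, Matrix.map_one _ Complex.ofReal_zero Complex.ofReal_one]
  have hUc' : U.map ((↑) : ℝ → ℂ) * Uᵀ.map (↑) = 1 := by
    rw [← map_mul', hU', Matrix.map_one _ Complex.ofReal_zero Complex.ofReal_one]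
  have hsub : M.map ((↑) : ℝ → ℂ) - z • 1
      = U.map (↑) * (diagonal (fun m => (d m : ℂ) - z) * Uᵀ.map (↑)) := by
    have : diagonal (fun m => (d m : ℂ) - z) = (diagonal d).map (↑) - z • 1 := by
      ext i j; by_cases h : i = j <;> simp [h]
    rw [this, Matrix.sub_mul, Matrix.mul_sub, Matrix.smul_mul, Matrix.mul_smul, Matrix.one_mul,
      hUc', hM, map_mul', map_mul', Matrix.mul_assoc]
  apply inv_eq_left_inv
  rw [hsub, Matrix.mul_assoc, Matrix.mul_assoc, ← Matrix.mul_assoc (Uᵀ.map _), hUc,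
    Matrix.one_mul, ← Matrix.mul_assoc (diagonal _), diagonal_mul_diagonal]
  have hinv : (fun m => ((d m : ℂ) - z)⁻¹ * ((d m : ℂ) - z)) = fun _ => 1 :=
    funext fun m => inv_mul_cancel₀ (hne m)
  rw [hinv, diagonal_one, Matrix.one_mul, hUc']

theorem exists_im_resolv_eq_sum {n : ℕ} {M : Matrix (Fin n) (Fin n) ℝ} (hM : M.IsSymm) :
    ∃ (U : Matrix (Fin n) (Fin n) ℝ) (d : Fin n → ℝ), (∀ j, ∑ m, U j m * U j m = 1) ∧
      ∀ u v : ℝ, v ≠ 0 → ∀ j k, (resolv M (u + v * Complex.I) j k).im =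
        ∑ m, U j m * U k m * halfPlanePoissonKernel u v (d m) := by
  obtain ⟨U, d, hU, hU', hMU⟩ := hM.exists_orthogonal_diagonalization
  refine ⟨U, d, fun j => by simpa [Matrix.mul_apply] using congrFun (congrFun hU' j) j,
    fun u v hv j k => ?_⟩
  rw [resolv_eq_of_diagonalization hU hU' hMU (by simpa using hv), Matrix.mul_apply,
    Complex.im_sum]
  refine Finset.sum_congr rfl fun m _ => ?_
  rw [mul_diagonal, map_apply, map_apply, transpose_apply, Complex.im_mul_ofReal,
    Complex.im_ofReal_mul, im_inv_ofReal_sub]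
  ring

section resolvent

variable {n : ℕ} {M : Matrix (Fin n) (Fin n) ℝ} (hM : M.IsSymm) (u : ℝ) {v : ℝ} (hv : 0 < v)
include hM hv

theorem im_resolv_apply_self_nonneg (j : Fin n) :
    0 ≤ (resolv M (u + v * Complex.I) j j).im := by
  obtain ⟨U, d, -, hR⟩ := exists_im_resolv_eq_sum hM
  rw [hR u v hv.ne']
  exact Finset.sum_nonneg fun m _ =>
    mul_nonneg (mul_self_nonneg _) (halfPlanePoissonKernel_nonneg u _ hv.le)

theorem im_resolv_apply_self_le_inv (j : Fin n) :
    (resolv M (u + v * Complex.I) j j).im ≤ v⁻¹ := by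
  obtain ⟨U, d, hU, hR⟩ := exists_im_resolv_eq_sum hM
  rw [hR u v hv.ne', ← mul_one v⁻¹, ← hU j, Finset.mul_sum]
  exact Finset.sum_le_sum fun m _ => by
    rw [mul_comm v⁻¹]
    exact mul_le_mul_of_nonneg_left (halfPlanePoissonKernel_le_inv u _ hv) (mul_self_nonneg _)

theorem abs_im_resolv_apply_le (j k : Fin n) :
    |(resolv M (u + v * Complex.I) j k).im| ≤
      ((resolv M (u + v * Complex.I) j j).im + (resolv M (u + v * Complex.I) k k).im) / 2 := by
  obtain ⟨U, d, -, hR⟩ := exists_im_resolv_eq_sum hM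
  rw [hR u v hv.ne', hR u v hv.ne', hR u v hv.ne', ← Finset.sum_add_distrib, Finset.sum_div]
  refine (Finset.abs_sum_le_sum_abs _ _).trans (Finset.sum_le_sum fun m _ => ?_)
  have hP := halfPlanePoissonKernel_nonneg u (d m) hv.le
  rw [abs_mul, abs_of_nonneg hP, abs_mul, ← add_mul, mul_div_right_comm]
  refine mul_le_mul_of_nonneg_right ?_ hP
  nlinarith [sq_nonneg (|U j m| - |U k m|), abs_mul_abs_self (U j m), abs_mul_abs_self (U k m)]

theorem abs_im_resolv_apply_le_inv (j k : Fin n) :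
    |(resolv M (u + v * Complex.I) j k).im| ≤ v⁻¹ := by
  linarith [abs_im_resolv_apply_le hM u hv j k, im_resolv_apply_self_le_inv hM u hv j,
    im_resolv_apply_self_le_inv hM u hv k]

theorem im_resolv_apply_self_le_div_mul {v' : ℝ} (hvv' : v ≤ v') (j : Fin n) :
    (resolv M (u + v * Complex.I) j j).im ≤ v' / v * (resolv M (u + v' * Complex.I) j j).im := by
  obtain ⟨U, d, -, hR⟩ := exists_im_resolv_eq_sum hM
  rw [hR u v hv.ne', hR u v' (hv.trans_le hvv').ne', div_mul_eq_mul_div, le_div_iff₀ hv,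
    Finset.sum_mul, Finset.mul_sum]
  refine Finset.sum_le_sum fun m _ => ?_
  have := mul_le_mul_of_nonneg_left (mul_halfPlanePoissonKernel_le u (d m) hv hvv')
    (mul_self_nonneg (U j m))
  linarith

theorem abs_im_resolv_apply_le_div_mul {v' : ℝ} (hvv' : v ≤ v') (j k : Fin n) :
    |(resolv M (u + v * Complex.I) j k).im| ≤
      v' / v * (((resolv M (u + v' * Complex.I) j j).im +
        (resolv M (u + v' * Complex.I) k k).im) / 2) := by
  linarith [abs_im_resolv_apply_le hM u hv j k, im_resolv_apply_self_le_div_mul hM u hv hvv' j,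
    im_resolv_apply_self_le_div_mul hM u hv hvv' k]

end resolvent

theorem div_one_add_sq_le_div_one_add_sq {a b : ℝ} (ha : 0 ≤ a) (hab : a ≤ b) (hb : b ≤ 1) :
    a / (1 + a) ^ 2 ≤ b / (1 + b) ^ 2 := by
  rw [div_le_div_iff₀ (pow_pos (by linarith) 2) (pow_pos (by linarith) 2)]
  have hab1 : a * b ≤ 1 := mul_le_one₀ (hab.trans hb) (ha.trans hab) hb
  nlinarith [mul_nonneg (sub_nonneg.2 hab) (sub_nonneg.2 hab1)]

theorem div_one_sub_sq_lt_div_one_sub_sq {a b : ℝ} (ha : 0 ≤ a) (hab : a < b) (hb : b < 1) :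
    a / (1 - a) ^ 2 < b / (1 - b) ^ 2 := by
  have ha1 : 0 < 1 - a := by linarith
  have hb1 : 0 < 1 - b := by linarith
  rw [div_lt_div_iff₀ (by positivity) (by positivity)]
  nlinarith [mul_pos (sub_pos.2 hab) (sub_pos.2 (show a * b < 1 by nlinarith))]

def IsSemicircleRoot (z s : ℂ) : Prop := 1 + z * s + s ^ 2 = 0 ∧ 0 < s.im

namespace IsSemicircleRoot

open Complex

variable {z s : ℂ}

theorem conj_add_mul_normSq (h : IsSemicircleRoot z s) :
    (starRingEnd ℂ) s + (z + s) * normSq s = 0 := by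
  rw [← mul_conj]
  linear_combination (starRingEnd ℂ) s * h.1

theorem im_mul_one_sub_normSq (h : IsSemicircleRoot z s) :
    s.im * (1 - normSq s) = z.im * normSq s := by
  have := congrArg Complex.im h.conj_add_mul_normSq
  simp only [add_im, conj_im, mul_im, ofReal_re, ofReal_im, zero_im] at this
  linear_combination -this

theorem re_mul_one_add_normSq (h : IsSemicircleRoot z s) :
    s.re * (1 + normSq s) = -z.re * normSq s := by
  have := congrArg Complex.re h.conj_add_mul_normSq
  simp only [add_re, conj_re, mul_re, ofReal_re, ofReal_im, zero_re] at this
  linear_combination this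

theorem normSq_pos (h : IsSemicircleRoot z s) : 0 < normSq s :=
  Complex.normSq_pos.2 fun hs => by simpa [hs] using h.2

theorem normSq_lt_one (h : IsSemicircleRoot z s) (hz : 0 < z.im) : normSq s < 1 := by
  have := h.im_mul_one_sub_normSq
  nlinarith [h.2, mul_pos hz h.normSq_pos]

theorem modulus_equation (h : IsSemicircleRoot z s) (hz : 0 < z.im) :
    z.re ^ 2 * normSq s / (1 + normSq s) ^ 2 + z.im ^ 2 * normSq s / (1 - normSq s) ^ 2 = 1 := by
  have hm := h.normSq_pos
  have hm1 : 0 < 1 - normSq s := sub_pos.2 (h.normSq_lt_one hz)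
  have hre := h.re_mul_one_add_normSq
  have him := h.im_mul_one_sub_normSq
  have hsq : s.re ^ 2 + s.im ^ 2 = normSq s := by rw [normSq_apply]; ring
  rw [div_add_div _ _ (by positivity) (by positivity), div_eq_one_iff_eq (by positivity)]
  refine mul_left_cancel₀ hm.ne' ?_
  linear_combination (1 - normSq s) ^ 2 * (1 + normSq s) ^ 2 * hsq
    - (1 - normSq s) ^ 2 * (s.re * (1 + normSq s) - z.re * normSq s) * hre
    - (1 + normSq s) ^ 2 * (s.im * (1 - normSq s) + z.im * normSq s) * him

theorem im_div_eq (h : IsSemicircleRoot z s) (hz : 0 < z.im) :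
    s.im / z.im = normSq s / (1 - normSq s) := by
  have hm1 : 0 < 1 - normSq s := sub_pos.2 (h.normSq_lt_one hz)
  rw [div_eq_div_iff hz.ne' hm1.ne']
  linear_combination h.im_mul_one_sub_normSq

theorem normSq_le_of_im_le {z' s' : ℂ} (h : IsSemicircleRoot z s) (h' : IsSemicircleRoot z' s')
    (hre : z.re = z'.re) (hz : 0 < z.im) (hzz' : z.im ≤ z'.im) : normSq s' ≤ normSq s := by
  have hz' := hz.trans_le hzz'
  by_contra! hlt
  have hre_term := mul_le_mul_of_nonneg_left
    (div_one_add_sq_le_div_one_add_sq h.normSq_pos.le hlt.le (h'.normSq_lt_one hz').le)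
    (sq_nonneg z.re)
  have him_term := mul_lt_mul' (pow_le_pow_left₀ hz.le hzz' 2)
    (div_one_sub_sq_lt_div_one_sub_sq h.normSq_pos.le hlt (h'.normSq_lt_one hz'))
    (div_nonneg h.normSq_pos.le (sq_nonneg _)) (by positivity)
  have e := h.modulus_equation hz
  have e' := h'.modulus_equation hz'
  rw [hre] at e hre_term
  simp only [mul_div_assoc] at e e' hre_term him_term ⊢
  linarith

theorem im_div_im_le {z' s' : ℂ} (h : IsSemicircleRoot z s) (h' : IsSemicircleRoot z' s')
    (hre : z.re = z'.re) (hz : 0 < z.im) (hzz' : z.im ≤ z'.im) :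
    s'.im / z'.im ≤ s.im / z.im := by
  have hz' := hz.trans_le hzz'
  rw [h.im_div_eq hz, h'.im_div_eq hz', div_le_div_iff₀ (sub_pos.2 (h'.normSq_lt_one hz'))
    (sub_pos.2 (h.normSq_lt_one hz))]
  nlinarith [h.normSq_le_of_im_le h' hre hz hzz']

end IsSemicircleRoot

theorem im_add_div_le_mul_of_isSemicircleRoot {s : ℂ → ℂ}
    (hs : ∀ z : ℂ, 0 < z.im → IsSemicircleRoot z (s z)) (u : ℝ) {v v' p N : ℝ} (hv : 0 < v)
    (hvv' : v ≤ v') (hp : 0 ≤ p) (hN : 0 ≤ N) :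
    (s (u + v' * Complex.I)).im + p / (N * v')
      ≤ v' / v * ((s (u + v * Complex.I)).im + p / (N * v)) := by
  have hv' : 0 < v' := hv.trans_le hvv'
  have him : (s (u + v' * Complex.I)).im / v' ≤ (s (u + v * Complex.I)).im / v := by
    simpa using (hs (u + v * Complex.I) (by simpa using hv)).im_div_im_le
      (hs (u + v' * Complex.I) (by simpa using hv')) (by simp) (by simpa using hv)
      (by simpa using hvv')
  have hdiv : p / (N * v') ≤ v' / v * (p / (N * v)) := by
    rw [← div_div, ← div_div]
    exact (div_le_div_of_nonneg_left (div_nonneg hp hN) hv hvv').trans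
      (le_mul_of_one_le_left (by positivity) ((one_le_div hv).2 hvv'))
  have hs_im : (s (u + v' * Complex.I)).im ≤ v' / v * (s (u + v * Complex.I)).im := by
    rw [div_le_div_iff₀ hv' hv] at him
    rw [div_mul_eq_mul_div, le_div_iff₀ hv]
    linarith
  rw [mul_add]
  exact add_le_add hs_im hdiv

section Measurability

variable {Ω ι : Type*} [MeasurableSpace Ω] [Fintype ι] [DecidableEq ι]

theorem measurable_matrix_det {R : Type*} [CommRing R] [MeasurableSpace R] [MeasurableMul₂ R]
    [MeasurableAdd₂ R] {A : Ω → Matrix ι ι R} (hA : ∀ i j, Measurable fun ω => A ω i j) :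
    Measurable fun ω => (A ω).det := by
  simp_rw [Matrix.det_apply, Units.smul_def, zsmul_eq_mul]
  exact Finset.measurable_sum _ fun σ _ =>
    measurable_const.mul (Finset.measurable_prod _ fun i _ => hA (σ i) i)

theorem measurable_matrix_inv_apply {K : Type*} [Field K] [MeasurableSpace K] [MeasurableMul₂ K]
    [MeasurableAdd₂ K] [MeasurableInv K] {A : Ω → Matrix ι ι K}
    (hA : ∀ i j, Measurable fun ω => A ω i j) (i j : ι) :
    Measurable fun ω => (A ω)⁻¹ i j := by
  simp_rw [Matrix.inv_def, Ring.inverse_eq_inv', Matrix.smul_apply, smul_eq_mul,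
    Matrix.adjugate_apply]
  refine (measurable_matrix_det hA).inv.mul (measurable_matrix_det fun a b => ?_)
  simp only [Matrix.updateRow_apply]
  split_ifs
  · exact measurable_const
  · exact hA a b

theorem measurable_resolv_apply {n : ℕ} {W : Ω → Matrix (Fin n) (Fin n) ℝ}
    (hW : ∀ i j, Measurable fun ω => W ω i j) (z : ℂ) (j k : Fin n) :
    Measurable fun ω => resolv (W ω) z j k :=
  measurable_matrix_inv_apply (fun a b => by
    simp only [Matrix.sub_apply, Matrix.map_apply]
    exact (Complex.measurable_ofReal.comp (hW a b)).sub_const _) j k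

end Measurability

theorem rpow_add_div_two_le {a b p : ℝ} (ha : 0 ≤ a) (hb : 0 ≤ b) (hp : 1 ≤ p) :
    ((a + b) / 2) ^ p ≤ (a ^ p + b ^ p) / 2 := by
  have := (convexOn_rpow hp).2 (Set.mem_Ici.2 ha) (Set.mem_Ici.2 hb)
    (by norm_num : (0:ℝ) ≤ 1/2) (by norm_num : (0:ℝ) ≤ 1/2) (by norm_num)
  simp only [smul_eq_mul] at this
  rw [add_div, add_div, div_eq_inv_mul, div_eq_inv_mul, div_eq_inv_mul (a ^ p),
    div_eq_inv_mul (b ^ p)]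
  simpa using this

section Integration

variable {Ω : Type*} [MeasurableSpace Ω] {P : Measure Ω}

theorem integrable_rpow_of_abs_le [IsFiniteMeasure P] {f : Ω → ℝ} (hf : Measurable f)
    {C p : ℝ} (hp : 0 ≤ p) (hC : ∀ ω, |f ω| ≤ C) : Integrable (fun ω => f ω ^ p) P :=
  Integrable.of_bound (hf.pow_const p).aestronglyMeasurable (C ^ p) (ae_of_all _ fun ω =>
    (Real.abs_rpow_le_abs_rpow _ _).trans (Real.rpow_le_rpow (abs_nonneg _) (hC ω) hp))

theorem integral_rpow_le_of_abs_le_mul_add_div_two {f g₁ g₂ : Ω → ℝ} {c p : ℝ} (hc : 0 ≤ c)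
    (hp : 1 ≤ p) (hg₁ : ∀ ω, 0 ≤ g₁ ω) (hg₂ : ∀ ω, 0 ≤ g₂ ω)
    (hfg : ∀ ω, |f ω| ≤ c * ((g₁ ω + g₂ ω) / 2)) (hf : Integrable (fun ω => f ω ^ p) P)
    (hg₁p : Integrable (fun ω => g₁ ω ^ p) P) (hg₂p : Integrable (fun ω => g₂ ω ^ p) P) :
    ∫ ω, f ω ^ p ∂P ≤ c ^ p * (((∫ ω, g₁ ω ^ p ∂P) + (∫ ω, g₂ ω ^ p ∂P)) / 2) := by
  have hp0 : 0 ≤ p := zero_le_one.trans hp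
  have hpoint : ∀ ω, f ω ^ p ≤ c ^ p * (g₁ ω ^ p + g₂ ω ^ p) / 2 := fun ω => calc
    f ω ^ p ≤ |f ω| ^ p := (le_abs_self _).trans (Real.abs_rpow_le_abs_rpow _ _)
    _ ≤ (c * ((g₁ ω + g₂ ω) / 2)) ^ p := Real.rpow_le_rpow (abs_nonneg _) (hfg ω) hp0
    _ = c ^ p * ((g₁ ω + g₂ ω) / 2) ^ p :=
      Real.mul_rpow hc (div_nonneg (add_nonneg (hg₁ ω) (hg₂ ω)) zero_le_two)
    _ ≤ c ^ p * ((g₁ ω ^ p + g₂ ω ^ p) / 2) := by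
      gcongr
      exact rpow_add_div_two_le (hg₁ ω) (hg₂ ω) hp
    _ = c ^ p * (g₁ ω ^ p + g₂ ω ^ p) / 2 := by ring
  calc ∫ ω, f ω ^ p ∂P ≤ ∫ ω, c ^ p * (g₁ ω ^ p + g₂ ω ^ p) / 2 ∂P :=
        integral_mono hf (((hg₁p.add hg₂p).const_mul _).div_const _) hpoint
    _ = c ^ p * (((∫ ω, g₁ ω ^ p ∂P) + (∫ ω, g₂ ω ^ p ∂P)) / 2) := by
        rw [integral_div, integral_const_mul, integral_add hg₁p hg₂p, mul_div_assoc]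

variable [IsFiniteMeasure P] {n : ℕ} {W : Ω → Matrix (Fin n) (Fin n) ℝ}
  (hW : ∀ i j, Measurable fun ω => W ω i j) (hsymm : ∀ ω, (W ω).IsSymm) (u : ℝ) {v : ℝ}
  (hv : 0 < v)
include hW hsymm hv

theorem integrable_im_resolv_apply_rpow {p : ℝ} (hp : 0 ≤ p) (j k : Fin n) :
    Integrable (fun ω => (resolv (W ω) (u + v * Complex.I) j k).im ^ p) P :=
  integrable_rpow_of_abs_le (Complex.measurable_im.comp (measurable_resolv_apply hW _ j k)) hp
    fun ω => abs_im_resolv_apply_le_inv (hsymm ω) u hv j k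

theorem integral_im_resolv_apply_rpow_le {v' p : ℝ} (hvv' : v ≤ v') (hp : 1 ≤ p) (j k : Fin n) :
    ∫ ω, (resolv (W ω) (u + v * Complex.I) j k).im ^ p ∂P ≤
      (v' / v) ^ p * (((∫ ω, (resolv (W ω) (u + v' * Complex.I) j j).im ^ p ∂P) +
        (∫ ω, (resolv (W ω) (u + v' * Complex.I) k k).im ^ p ∂P)) / 2) := by
  have hv' : 0 < v' := hv.trans_le hvv'
  have hp0 : 0 ≤ p := zero_le_one.trans hp
  exact integral_rpow_le_of_abs_le_mul_add_div_two (div_pos hv' hv).le hp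
    (fun ω => im_resolv_apply_self_nonneg (hsymm ω) u hv' j)
    (fun ω => im_resolv_apply_self_nonneg (hsymm ω) u hv' k)
    (fun ω => abs_im_resolv_apply_le_div_mul (hsymm ω) u hv hvv' j k)
    (integrable_im_resolv_apply_rpow hW hsymm u hv hp0 j k)
    (integrable_im_resolv_apply_rpow hW hsymm u hv' hp0 j j)
    (integrable_im_resolv_apply_rpow hW hsymm u hv' hp0 k k)

end Integration

theorem descent_lemma_imag_general
    {Ω : Type} [MeasurableSpace Ω] (P : Measure Ω) [IsProbabilityMeasure P]
    (n : ℕ) (W : Ω → Matrix (Fin n) (Fin n) ℝ)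
    (_hmeas : ∀ i j, Measurable fun ω => W ω i j)
    (_hsymm : ∀ ω, (W ω).IsSymm)
    (s : ℂ → ℂ)
    (_hs : ∀ z : ℂ, 0 < z.im → 1 + z * s z + s z ^ 2 = 0 ∧ 0 < (s z).im)
    (u H₀ A₁ κ vt p : ℝ) (hH₀ : 0 < H₀) (hvt : 0 < vt)
    (hp : 1 ≤ p)
    (hyp : ∀ v' : ℝ, vt ≤ v' → p ≤ A₁ * (n * v') ^ κ →
      ∀ j : Fin n,
        (∫ ω, ((resolv (W ω) (u + v' * Complex.I)) j j).im ^ p ∂P)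
          ≤ H₀ ^ p * Real.log n ^ p
            * ((s (u + v' * Complex.I)).im + p / (n * v')) ^ p) :
    ∀ s₀ v : ℝ, 1 ≤ s₀ → vt / s₀ ≤ v → p ≤ A₁ * (n * (s₀ * v)) ^ κ →
      ∀ j k : Fin n,
        (∫ ω, ((resolv (W ω) (u + v * Complex.I)) j k).im ^ p ∂P)
          ≤ s₀ ^ (2 * p) * H₀ ^ p * Real.log n ^ p
            * ((s (u + v * Complex.I)).im + p / (n * v)) ^ p := by
  intro s₀ v hs₀ hvt_le hpA j k
  have hs₀pos : 0 < s₀ := one_pos.trans_le hs₀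
  have hv : 0 < v := (div_pos hvt hs₀pos).trans_le hvt_le
  set v' := s₀ * v
  have hvv' : v ≤ v' := le_mul_of_one_le_left hv.le hs₀
  have hratio : v' / v = s₀ := mul_div_cancel_right₀ _ hv.ne'
  have hvt_le' : vt ≤ v' := by rwa [div_le_iff₀' hs₀pos] at hvt_le
  have hmoment := integral_im_resolv_apply_rpow_le (P := P) _hmeas _hsymm u hv hvv' hp j k
  have hΨ := im_add_div_le_mul_of_isSemicircleRoot _hs u hv hvv' (zero_le_one.trans hp)
    n.cast_nonneg
  rw [hratio] at hmoment hΨ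
  have hΨ_nonneg : 0 ≤ (s (u + v' * Complex.I)).im + p / (n * v') :=
    add_nonneg (_hs _ (by simpa using hv.trans_le hvv')).2.le (by positivity)
  have hcoeff : 0 ≤ H₀ ^ p * Real.log n ^ p :=
    mul_nonneg (Real.rpow_nonneg hH₀.le p) (Real.rpow_nonneg (Real.log_natCast_nonneg n) p)
  have hs₀p : 0 ≤ s₀ ^ p := Real.rpow_nonneg hs₀pos.le p
  calc _ ≤ _ := hmoment
    _ ≤ s₀ ^ p * (H₀ ^ p * Real.log n ^ p *
          ((s (u + v' * Complex.I)).im + p / (n * v')) ^ p) := by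
        gcongr
        linarith [hyp v' hvt_le' hpA j, hyp v' hvt_le' hpA k]
    _ ≤ s₀ ^ p * (H₀ ^ p * Real.log n ^ p *
          (s₀ * ((s (u + v * Complex.I)).im + p / (n * v))) ^ p) := by
        gcongr
    _ = _ := by
        rw [Real.mul_rpow hs₀pos.le (nonneg_of_mul_nonneg_right (hΨ_nonneg.trans hΨ) hs₀pos),
          two_mul, Real.rpow_add hs₀pos]
        ring

/-- Lemma 3.6 (descent lemma for imaginary parts): bounds
`E (Im R_jj)^p ≤ H₀^p log^p n Ψ^p` at scale `vt` propagate down to scale `vt/s₀`. -/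
theorem descent_lemma_imag
    {Ω : Type} [MeasurableSpace Ω] (P : Measure Ω) [IsProbabilityMeasure P]
    (n : ℕ) (W : Ω → Matrix (Fin n) (Fin n) ℝ)
    (_hmeas : ∀ i j, Measurable fun ω => W ω i j)
    (_hsymm : ∀ ω, (W ω).IsSymm)
    (s : ℂ → ℂ)
    (_hs : ∀ z : ℂ, 0 < z.im → 1 + z * s z + s z ^ 2 = 0 ∧ 0 < (s z).im)
    (u H₀ A₁ κ vt p : ℝ) (hH₀ : 0 < H₀) (hA₁ : 0 < A₁) (hκ : 0 < κ) (hvt : 0 < vt)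
    (hp : 1 ≤ p)
    (hyp : ∀ v' : ℝ, vt ≤ v' → p ≤ A₁ * (n * v') ^ κ →
      ∀ j : Fin n,
        (∫ ω, ((resolv (W ω) (u + v' * Complex.I)) j j).im ^ p ∂P)
          ≤ H₀ ^ p * Real.log n ^ p
            * ((s (u + v' * Complex.I)).im + p / (n * v')) ^ p) :
    ∀ s₀ v : ℝ, 1 ≤ s₀ → vt / s₀ ≤ v → p ≤ A₁ * (n * (s₀ * v)) ^ κ →
      ∀ j k : Fin n,
        (∫ ω, ((resolv (W ω) (u + v * Complex.I)) j k).im ^ p ∂P)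
          ≤ s₀ ^ (2 * p) * H₀ ^ p * Real.log n ^ p
            * ((s (u + v * Complex.I)).im + p / (n * v)) ^ p :=
  descent_lemma_imag_general P n W _hmeas _hsymm s _hs u H₀ A₁ κ vt p hH₀ hvt hp hyp
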